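/- Let f ∈ C³(ℝ,ℝ) satisfy hypotheses (H1)–(H3) with f''(0) > 0, and let z : ℝ → ℝ be an entire solution of x'(t) = f(x(t−1)) with m < 0 < M, m ≤ z(t) ≤ M for all t ∈ ℝ, and z(1) = m. If f'(0) ∈ [−1.5, 0), then m > μ = 2f'(0)/f''(0) and r(r(−r(M)/2)) > μ (in particular all these expressions are well defined, i.e. the relevant arguments lie in (μ, +∞)). If f'(0) ∈ [−1.5, −1.25], then moreover m > ν = 2A'(0)/A''(0). -/

import Mathlib

open Real Set

/-- Schwarzian derivative of `f` at `x`. -/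
noncomputable def Schwarzian (f : ℝ → ℝ) (x : ℝ) : ℝ :=
  iteratedDeriv 3 f x / deriv f x - (3 / 2) * (iteratedDeriv 2 f x / deriv f x) ^ 2

/-- Hypotheses (H1)-(H3): `f ∈ C³`, negative feedback with `f'(0) < 0`,
boundedness below, at most one critical point which is a local extremum,
and negative Schwarzian wherever `f' ≠ 0`. -/
def HypH (f : ℝ → ℝ) : Prop :=
  ContDiff ℝ 3 f ∧
  (∀ x : ℝ, x ≠ 0 → x * f x < 0) ∧
  deriv f 0 < 0 ∧
  (∃ C : ℝ, ∀ x : ℝ, C ≤ f x) ∧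
  (∀ u v : ℝ, deriv f u = 0 → deriv f v = 0 → u = v) ∧
  (∀ u : ℝ, deriv f u = 0 → IsLocalExtr f u) ∧
  (∀ u : ℝ, deriv f u ≠ 0 → Schwarzian f u < 0)

/-- The rational comparison function `r(x; a, b) = a²x/(a - bx)`. -/
noncomputable def rfun (a b : ℝ) (x : ℝ) : ℝ := a ^ 2 * x / (a - b * x)

/-- `A(x) = x + r(x) + (1/r(x)) ∫_x^0 r(t) dt`, with `A(0) = 0`. -/
noncomputable def Afun (a b : ℝ) (x : ℝ) : ℝ :=
  if x = 0 then 0 else x + rfun a b x + (1 / rfun a b x) * ∫ t in x..0, rfun a b t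

/-- `B(x) = (1/r(x)) ∫_{-r(x)}^0 r(s) ds`, with `B(0) = 0`. -/
noncomputable def Bfun (a b : ℝ) (x : ℝ) : ℝ :=
  if x = 0 then 0 else (1 / rfun a b x) * ∫ s in (-(rfun a b x))..0, rfun a b s

/-- `D(x) = A(x)` if `r(x) < -x`, and `D(x) = B(x)` otherwise. -/
noncomputable def Dfun (a b : ℝ) (x : ℝ) : ℝ :=
  if rfun a b x < -x then Afun a b x else Bfun a b x

/-!
A negative Schwarzian makes `(-f')^(-1/2)` convex wherever `f' < 0`. Comparing it with its
tangent line at `0` gives `f' ≥ r'`, hence `f ≥ r` on `(0, ∞)` up to the critical point of `f`;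
beyond it `f` increases while `r` decreases. In particular `f > -a²/b`, so a solution attaining its
minimum `m` at `t = 1` has `z(0) = 0` and `z(u) ≤ (a²/b)(-u)` on `[-1, 0]`, whence
`m = ∫_{-1}^0 f(z(u)) du ≥ ∫_{-1}^0 r((a²/b)(-u)) du = (-a² - a log(1 - a))/b`.
The claimed inequalities then reduce to elementary estimates of `log(1 - a)`.
-/

theorem sub_le_sub_of_hasDerivAt_le {F G F' G' : ℝ → ℝ} {x y : ℝ} (hxy : x ≤ y)
    (hF : ∀ t ∈ Icc x y, HasDerivAt F (F' t) t) (hG : ∀ t ∈ Icc x y, HasDerivAt G (G' t) t)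
    (hle : ∀ t ∈ Ioo x y, F' t ≤ G' t) : F y - F x ≤ G y - G x := by
  have hD : ∀ t ∈ Icc x y, HasDerivAt (fun t => G t - F t) (G' t - F' t) t :=
    fun t ht => (hG t ht).sub (hF t ht)
  have hmono : MonotoneOn (fun t => G t - F t) (Icc x y) := by
    refine monotoneOn_of_deriv_nonneg (convex_Icc x y)
      (fun t ht => (hD t ht).continuousAt.continuousWithinAt) ?_ ?_ <;> rw [interior_Icc]
    · exact fun t ht => (hD t (Ioo_subset_Icc_self ht)).differentiableAt.differentiableWithinAt
    · intro t ht
      rw [(hD t (Ioo_subset_Icc_self ht)).deriv, sub_nonneg]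
      exact hle t ht
  linarith [hmono (left_mem_Icc.2 hxy) (right_mem_Icc.2 hxy) hxy]

theorem IsPreconnected.neg_of_ne_zero {g : ℝ → ℝ} {S : Set ℝ} (hS : IsPreconnected S)
    (hg : ContinuousOn g S) (hne : ∀ t ∈ S, g t ≠ 0) {u v : ℝ} (hu : u ∈ S) (hv : v ∈ S)
    (hgu : g u < 0) : g v < 0 := by
  by_contra! hgv
  obtain ⟨t, ht, hgt⟩ := hS.intermediate_value hu hv hg ⟨hgu.le, hgv⟩
  exact hne t ht hgt

theorem StrictAntiOn.not_isLocalExtr {f : ℝ → ℝ} {u c v : ℝ} (h : StrictAntiOn f (Icc u v))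
    (huc : u < c) (hcv : c < v) : ¬ IsLocalExtr f c := by
  have hc : c ∈ Icc u v := ⟨huc.le, hcv.le⟩
  rintro (hmin | hmax)
  · obtain ⟨t, hft, htc, htv⟩ :=
      ((hmin.filter_mono nhdsWithin_le_nhds).and (Ioo_mem_nhdsGT hcv)).exists
    exact (h hc ⟨huc.le.trans htc.le, htv.le⟩ htc).not_ge hft
  · obtain ⟨t, hft, hut, htc⟩ :=
      ((hmax.filter_mono nhdsWithin_le_nhds).and (Ioo_mem_nhdsLT huc)).exists
    exact (h ⟨hut.le, htc.le.trans hcv.le⟩ hc htc).not_ge hft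

theorem ContDiff.hasDerivAt_iteratedDeriv {f : ℝ → ℝ} {N : WithTop ℕ∞} {n : ℕ}
    (hf : ContDiff ℝ N f) (hn : n < N) (t : ℝ) :
    HasDerivAt (iteratedDeriv n f) (iteratedDeriv (n + 1) f t) t := by
  rw [iteratedDeriv_succ]
  exact (hf.differentiable_iteratedDeriv n hn t).hasDerivAt

section rfun

variable {a b : ℝ}

@[simp] theorem rfun_zero : rfun a b 0 = 0 := by simp [rfun]

theorem hasDerivAt_rfun {y : ℝ} (hy : a - b * y ≠ 0) :
    HasDerivAt (rfun a b) (a ^ 3 / (a - b * y) ^ 2) y := by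
  have h := ((hasDerivAt_id y).const_mul (a ^ 2)).div
    (((hasDerivAt_id y).const_mul b).const_sub a) hy
  exact h.congr_deriv (by simp only [id]; ring)

theorem rfun_eq_neg_div {y : ℝ} : rfun a b y = -(a ^ 2 * y) / (b * y - a) := by
  rw [rfun, ← neg_div_neg_eq, neg_sub]

theorem antitoneOn_rfun (ha : a < 0) (hb : 0 ≤ b) : AntitoneOn (rfun a b) (Ici 0) := by
  intro x (hx : 0 ≤ x) y (hy : 0 ≤ y) hxy
  rw [rfun_eq_neg_div, rfun_eq_neg_div, div_le_div_iff₀ (by nlinarith) (by nlinarith)]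
  nlinarith [mul_nonneg (sq_nonneg a) (sub_nonneg.2 hxy)]

theorem rfun_mem_Ioo (ha : a < 0) (hb : 0 < b) {y : ℝ} (hy : 0 < y) :
    rfun a b y ∈ Ioo (-a ^ 2 / b) 0 := by
  rw [rfun_eq_neg_div]
  have hd : 0 < b * y - a := by nlinarith
  constructor
  · rw [div_lt_div_iff₀ hb hd]
    nlinarith [pow_pos (neg_pos.2 ha) 3]
  · exact div_neg_of_neg_of_pos (by nlinarith [sq_pos_of_neg ha]) hd

end rfun

theorem rpow_neg_half_sq_mul {x : ℝ} (hx : 0 < x) : (x ^ (-(1 / 2) : ℝ)) ^ 2 * x = 1 := by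
  rw [← Real.rpow_natCast, ← Real.rpow_mul hx.le]
  norm_num
  rw [Real.rpow_neg_one, inv_mul_cancel₀ hx.ne']

theorem HasDerivAt.neg_rpow_neg_half {p : ℝ → ℝ} {p' t : ℝ} (hp : HasDerivAt p p' t)
    (ht : p t < 0) :
    HasDerivAt (fun t => (-p t) ^ (-(1 / 2) : ℝ)) (p' * ((-p t) ^ (-(1 / 2) : ℝ)) ^ 3 / 2) t := by
  have hpos : 0 < -p t := neg_pos.2 ht
  refine (hp.neg.rpow_const (p := -(1 / 2)) (Or.inl hpos.ne')).congr_deriv ?_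
  rw [← Real.rpow_natCast, ← Real.rpow_mul hpos.le]
  norm_num
  ring

section SchwarzianConvexity

variable {p q s : ℝ → ℝ} (hp : ∀ t, HasDerivAt p (q t) t) (hq : ∀ t, HasDerivAt q (s t) t)

include hp hq

/-- `s p < (3/2) q²` says that an antiderivative of `p` has negative Schwarzian; this makes
`(-p)^(-1/2)` convex. -/
theorem tangent_le_rpow_neg_half {x y : ℝ} (hxy : x ≤ y) (hneg : ∀ t ∈ Icc x y, p t < 0)
    (hS : ∀ t ∈ Icc x y, s t * p t < 3 / 2 * q t ^ 2) :
    (-p x) ^ (-(1 / 2) : ℝ) + q x * ((-p x) ^ (-(1 / 2) : ℝ)) ^ 3 / 2 * (y - x) ≤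
      (-p y) ^ (-(1 / 2) : ℝ) := by
  set φ : ℝ → ℝ := fun t => (-p t) ^ (-(1 / 2) : ℝ)
  set H : ℝ → ℝ := fun t => q t * φ t ^ 3 / 2
  have hφ : ∀ t ∈ Icc x y, HasDerivAt φ (H t) t :=
    fun t ht => (hp t).neg_rpow_neg_half (hneg t ht)
  have hH : ∀ t ∈ Icc x y,
      HasDerivAt H ((s t * φ t ^ 3 + q t * (3 * φ t ^ 2 * H t)) / 2) t := by
    intro t ht
    refine HasDerivAt.congr_deriv (f := H) (((hq t).mul ((hφ t ht).pow 3)).div_const 2) ?_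
    simp only [Pi.pow_apply]
    ring
  have hH' : ∀ t ∈ Icc x y, 0 ≤ (s t * φ t ^ 3 + q t * (3 * φ t ^ 2 * H t)) / 2 := by
    intro t ht
    have hsq : φ t ^ 2 * -p t = 1 := rpow_neg_half_sq_mul (neg_pos.2 (hneg t ht))
    have hφpos : 0 < φ t := Real.rpow_pos_of_pos (neg_pos.2 (hneg t ht)) _
    have key : (s t * φ t ^ 3 + q t * (3 * φ t ^ 2 * H t)) / 2 =
        φ t ^ 5 * (3 / 2 * q t ^ 2 - s t * p t) / 2 := by
      linear_combination (-(s t * φ t ^ 3 / 2)) * hsq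
    rw [key]
    exact div_nonneg (mul_nonneg (pow_nonneg hφpos.le 5) (sub_nonneg.2 (hS t ht).le)) zero_le_two
  have hHmono : ∀ t ∈ Ioo x y, H x ≤ H t := by
    intro t ht
    have hsub : Icc x t ⊆ Icc x y := Icc_subset_Icc_right ht.2.le
    have := sub_le_sub_of_hasDerivAt_le ht.1.le (F := fun _ => (0 : ℝ)) (F' := fun _ => 0)
      (fun u _ => hasDerivAt_const u 0) (fun u hu => hH u (hsub hu))
      (fun u hu => hH' u (hsub (Ioo_subset_Icc_self hu)))
    linarith
  have := sub_le_sub_of_hasDerivAt_le hxy (F := fun t => H x * t) (F' := fun _ => H x)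
    (fun t _ => (hasDerivAt_id t).const_mul (H x) |>.congr_deriv (mul_one _)) hφ hHmono
  simp only [φ, H] at this ⊢
  linarith

/-- Squared tangent-line bound at `0`; the left side is `r'(X)` for `r = rfun a b`. -/
theorem pow_three_div_sq_le {a b X : ℝ} (hX : 0 ≤ X) (hb : 0 ≤ b) (hp0 : p 0 = a)
    (hq0 : q 0 = 2 * b) (hneg : ∀ t ∈ Icc 0 X, p t < 0)
    (hS : ∀ t ∈ Icc 0 X, s t * p t < 3 / 2 * q t ^ 2) :
    a ^ 3 / (a - b * X) ^ 2 ≤ p X := by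
  have htan := tangent_le_rpow_neg_half hp hq hX hneg hS
  have hA : 0 < -a := hp0 ▸ neg_pos.2 (hneg 0 (left_mem_Icc.2 hX))
  have hP : 0 < -p X := neg_pos.2 (hneg X (right_mem_Icc.2 hX))
  set v := (-p 0) ^ (-(1 / 2) : ℝ)
  set w := (-p X) ^ (-(1 / 2) : ℝ)
  have hv : v ^ 2 * -a = 1 := hp0 ▸ rpow_neg_half_sq_mul (hp0 ▸ hA)
  have hw : w ^ 2 * -p X = 1 := rpow_neg_half_sq_mul hP
  have hv0 : 0 ≤ v := Real.rpow_nonneg (hp0 ▸ hA.le) _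
  rw [hq0, sub_zero] at htan
  have h1 : v * (-a + b * X) ≤ w * -a := by
    linear_combination (-a) * htan - (b * X * v) * hv
  have h2 : (v * (-a + b * X)) ^ 2 ≤ (w * -a) ^ 2 :=
    pow_le_pow_left₀ (mul_nonneg hv0 (by nlinarith)) h1 2
  have h3 : -p X * (-a + b * X) ^ 2 ≤ (-a) ^ 3 := by
    have := mul_le_mul_of_nonneg_left h2 (mul_nonneg hP.le hA.le)
    linear_combination this - (-p X * (-a + b * X) ^ 2) * hv + (-a) ^ 3 * hw
  rw [div_le_iff₀ (sq_pos_of_neg (by nlinarith))]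
  linear_combination h3

end SchwarzianConvexity

theorem iteratedDeriv_three_mul_lt {f : ℝ → ℝ} {u : ℝ} (hu : deriv f u ≠ 0)
    (hS : Schwarzian f u < 0) :
    iteratedDeriv 3 f u * deriv f u < 3 / 2 * iteratedDeriv 2 f u ^ 2 := by
  have key : Schwarzian f u * deriv f u ^ 2 =
      iteratedDeriv 3 f u * deriv f u - 3 / 2 * iteratedDeriv 2 f u ^ 2 := by
    unfold Schwarzian
    field_simp
  nlinarith [mul_neg_of_neg_of_pos hS (by positivity : 0 < deriv f u ^ 2)]

theorem rfun_le_of_deriv_neg {f : ℝ → ℝ} (hf : ContDiff ℝ 3 f)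
    (hS : ∀ u, deriv f u ≠ 0 → Schwarzian f u < 0) (hf0 : f 0 = 0) {b X : ℝ} (hb : 0 ≤ b)
    (hq0 : iteratedDeriv 2 f 0 = 2 * b) (hX : 0 < X) (hneg : ∀ y ∈ Ico 0 X, deriv f y < 0) :
    rfun (deriv f 0) b X ≤ f X := by
  have ha : deriv f 0 < 0 := hneg 0 ⟨le_rfl, hX⟩
  have hp : ∀ t, HasDerivAt (deriv f) (iteratedDeriv 2 f t) t := by
    simpa only [iteratedDeriv_one] using hf.hasDerivAt_iteratedDeriv (n := 1) (by norm_num)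
  have hq : ∀ t, HasDerivAt (iteratedDeriv 2 f) (iteratedDeriv 3 f t) t :=
    hf.hasDerivAt_iteratedDeriv (by norm_num)
  have hcmp := sub_le_sub_of_hasDerivAt_le hX.le (G := f) (G' := deriv f)
    (fun y hy => hasDerivAt_rfun (by nlinarith [hy.1] : deriv f 0 - b * y ≠ 0))
    (fun y _ => (hf.differentiable (by norm_num) y).hasDerivAt) fun y hy => by
      have hsub : Icc 0 y ⊆ Ico 0 X := Icc_subset_Ico_right hy.2
      exact pow_three_div_sq_le hp hq hy.1.le hb rfl hq0 (fun t ht => hneg t (hsub ht))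
        fun t ht => iteratedDeriv_three_mul_lt (hneg t (hsub ht)).ne (hS t (hneg t (hsub ht)).ne)
  simp only [rfun_zero, hf0, sub_zero] at hcmp
  exact hcmp

namespace HypH

variable {f : ℝ → ℝ} (hf : HypH f)
include hf

theorem continuous : Continuous f := hf.1.continuous

theorem continuous_deriv : Continuous (deriv f) := hf.1.continuous_deriv (by norm_num)

theorem map_zero : f 0 = 0 := by
  have hcont := hf.continuous.continuousAt (x := 0)
  have hsign := hf.2.1
  apply le_antisymm
  · refine le_of_tendsto (hcont.continuousWithinAt (s := Ioi 0))
      (eventually_nhdsWithin_of_forall fun y (hy : 0 < y) => ?_)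
    nlinarith [hsign y hy.ne']
  · refine ge_of_tendsto (hcont.continuousWithinAt (s := Iio 0))
      (eventually_nhdsWithin_of_forall fun y (hy : y < 0) => ?_)
    nlinarith [hsign y hy.ne]

theorem nonneg_of_nonpos {x : ℝ} (hx : x ≤ 0) : 0 ≤ f x := by
  rcases hx.lt_or_eq with hx | rfl
  · nlinarith [hf.2.1 x hx.ne]
  · exact hf.map_zero.ge

theorem eq_zero_of_map_eq_zero {x : ℝ} (hx : f x = 0) : x = 0 := by
  by_contra h
  simpa [hx] using hf.2.1 x h

theorem deriv_neg_of_lt_critical {c y : ℝ} (hc : deriv f c = 0) (hy : y ∈ Ico 0 c) :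
    deriv f y < 0 := by
  have huniq := hf.2.2.2.2.1
  exact isPreconnected_Ico.neg_of_ne_zero hf.continuous_deriv.continuousOn
    (fun t ht h => (huniq t c h hc ▸ ht).2.false) ⟨le_rfl, hy.1.trans_lt hy.2⟩ hy hf.2.2.1

theorem deriv_pos_of_critical_lt {c t : ℝ} (hc : deriv f c = 0) (hc0 : 0 < c) (hct : c < t) :
    0 < deriv f t := by
  obtain ⟨-, -, -, -, huniq, hextr, -⟩ := id hf
  have hne : ∀ u ∈ Ioi c, deriv f u ≠ 0 := fun u hu h => lt_irrefl c (huniq u c h hc ▸ hu)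
  by_contra! ht
  have hneg : ∀ u ∈ Ioi c, deriv f u < 0 := fun u hu =>
    isPreconnected_Ioi.neg_of_ne_zero hf.continuous_deriv.continuousOn hne hct hu
      ((hne t hct).lt_of_le ht)
  have hleft : StrictAntiOn f (Icc 0 c) :=
    strictAntiOn_of_deriv_neg (convex_Icc 0 c) hf.continuous.continuousOn fun u hu =>
      hf.deriv_neg_of_lt_critical hc (Ioo_subset_Ico_self (interior_Icc (a := (0 : ℝ)) ▸ hu))
  have hright : StrictAntiOn f (Icc c t) :=
    strictAntiOn_of_deriv_neg (convex_Icc c t) hf.continuous.continuousOn fun u hu =>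
      hneg u (interior_Icc (a := c) ▸ hu).1
  have hanti : StrictAntiOn f (Icc 0 t) := by
    rw [← Icc_union_Icc_eq_Icc hc0.le hct.le]
    exact hleft.union hright (isGreatest_Icc hc0.le) (isLeast_Icc hct.le)
  exact hanti.not_isLocalExtr hc0 hct (hextr c hc)

theorem rfun_le {b : ℝ} (hb : 0 ≤ b) (hq0 : iteratedDeriv 2 f 0 = 2 * b) {x : ℝ} (hx : 0 < x) :
    rfun (deriv f 0) b x ≤ f x := by
  have hcmp : ∀ {X}, 0 < X → (∀ y ∈ Ico 0 X, deriv f y < 0) → rfun (deriv f 0) b X ≤ f X :=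
    rfun_le_of_deriv_neg hf.1 hf.2.2.2.2.2.2 hf.map_zero hb hq0
  by_cases hneg : ∀ y ∈ Ico 0 x, deriv f y < 0
  · exact hcmp hx hneg
  push Not at hneg
  obtain ⟨y, hy, hfy⟩ := hneg
  obtain ⟨c, hc, hfc⟩ : ∃ c ∈ Icc 0 y, deriv f c = 0 :=
    intermediate_value_Icc hy.1 hf.continuous_deriv.continuousOn ⟨hf.2.2.1.le, hfy⟩
  have hc0 : 0 < c := hc.1.lt_of_ne (by rintro rfl; exact hf.2.2.1.ne hfc)
  have hcx : c ≤ x := hc.2.trans hy.2.le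
  have hmono : MonotoneOn f (Icc c x) :=
    (strictMonoOn_of_deriv_pos (convex_Icc c x) hf.continuous.continuousOn fun u hu =>
      hf.deriv_pos_of_critical_lt hfc hc0 (interior_Icc (a := c) ▸ hu).1).monotoneOn
  calc rfun (deriv f 0) b x ≤ rfun (deriv f 0) b c :=
        antitoneOn_rfun hf.2.2.1 hb (mem_Ici.2 hc0.le) (mem_Ici.2 (hc0.le.trans hcx)) hcx
    _ ≤ f c := hcmp hc0 fun u hu => hf.deriv_neg_of_lt_critical hfc hu
    _ ≤ f x := hmono (left_mem_Icc.2 hcx) (right_mem_Icc.2 hcx) hcx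

theorem neg_sq_div_le {b : ℝ} (hb : 0 < b) (hq0 : iteratedDeriv 2 f 0 = 2 * b) (x : ℝ) :
    -deriv f 0 ^ 2 / b ≤ f x := by
  rcases le_or_gt x 0 with hx | hx
  · exact (div_nonpos_of_nonpos_of_nonneg (neg_nonpos.2 (sq_nonneg _)) hb.le).trans
      (hf.nonneg_of_nonpos hx)
  · exact (rfun_mem_Ioo hf.2.2.1 hb hx).1.le.trans (hf.rfun_le hb.le hq0 hx)

end HypH

section minBound

variable {a b : ℝ}

/-- The value of `∫_{-1}^0 r(a²/b · (-u)) du`, a lower bound for the minimum `m` of an entire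
solution. -/
noncomputable def minBound (a b : ℝ) : ℝ := (-a ^ 2 - a * Real.log (1 - a)) / b

theorem monotoneOn_rfun_mul_neg (ha : a < 0) (hb : 0 ≤ b) :
    MonotoneOn (fun u => rfun a b (a ^ 2 / b * -u)) (Iic 0) := by
  intro u (hu : u ≤ 0) v (hv : v ≤ 0) huv
  have hc : 0 ≤ a ^ 2 / b := by positivity
  exact antitoneOn_rfun ha hb (mem_Ici.2 (by nlinarith)) (mem_Ici.2 (by nlinarith)) (by nlinarith)

theorem intervalIntegrable_rfun_mul_neg (ha : a < 0) (hb : 0 ≤ b) :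
    IntervalIntegrable (fun u => rfun a b (a ^ 2 / b * -u)) MeasureTheory.volume (-1) 0 :=
  ((monotoneOn_rfun_mul_neg ha hb).mono
    (by rw [uIcc_of_le (by norm_num)]; exact Icc_subset_Iic_self)).intervalIntegrable

theorem integral_rfun_mul_neg (ha : a < 0) (hb : 0 < b) :
    ∫ u in (-1 : ℝ)..0, rfun a b (a ^ 2 / b * -u) = minBound a b := by
  have hderiv : ∀ u ∈ uIcc (-1 : ℝ) 0, HasDerivAt
      (fun u => -(a ^ 2 / b) * u + a / b * Real.log (1 + a * u)) (rfun a b (a ^ 2 / b * -u)) u := by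
    intro u hu
    rw [uIcc_of_le (by norm_num)] at hu
    have hpos : 0 < 1 + a * u := by nlinarith [hu.2]
    have h := ((hasDerivAt_id u).const_mul (-(a ^ 2 / b))).add
      (((((hasDerivAt_id u).const_mul a).const_add 1).log hpos.ne').const_mul (a / b))
    refine h.congr_deriv ?_
    simp only [id, rfun]
    field_simp [hpos.ne']
    ring
  rw [intervalIntegral.integral_eq_sub_of_hasDerivAt hderiv
    (intervalIntegrable_rfun_mul_neg ha hb.le), minBound]
  simp only [mul_zero, add_zero, Real.log_one]
  ring_nf

end minBound

theorem HypH.minBound_le {f z : ℝ → ℝ} (hf : HypH f) {b : ℝ} (hb : 0 < b)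
    (hq0 : iteratedDeriv 2 f 0 = 2 * b) (hz : ∀ t, HasDerivAt z (f (z (t - 1))) t)
    (hmin : ∀ t, z 1 ≤ z t) : minBound (deriv f 0) b ≤ z 1 := by
  set a := deriv f 0
  have ha : a < 0 := hf.2.2.1
  have hzc : Continuous z := continuous_iff_continuousAt.2 fun t => (hz t).continuousAt
  have hz0 : z 0 = 0 := by
    refine hf.eq_zero_of_map_eq_zero ?_
    simpa using (IsLocalMin.hasDerivAt_eq_zero (Filter.Eventually.of_forall hmin) (hz 1))
  have hzle : ∀ u ≤ 0, z u ≤ a ^ 2 / b * -u := by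
    intro u hu
    have := mul_sub_le_image_sub_of_le_deriv (fun t => (hz t).differentiableAt)
      (fun t => (hz t).deriv ▸ hf.neg_sq_div_le hb hq0 (z (t - 1))) hu
    rw [hz0] at this
    linarith [show -a ^ 2 / b * (0 - u) = -(a ^ 2 / b * -u) by ring]
  have hm : ∫ u in (-1 : ℝ)..0, f (z u) = z 1 := by
    have := intervalIntegral.integral_eq_sub_of_hasDerivAt (fun t _ => hz t)
      ((hf.continuous.comp (hzc.comp (continuous_sub_right 1))).intervalIntegrable 0 1)
    rw [intervalIntegral.integral_comp_sub_right (fun u => f (z u)), hz0, sub_zero] at this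
    norm_num at this
    exact this
  have hpt : ∀ u ∈ Icc (-1 : ℝ) 0, rfun a b (a ^ 2 / b * -u) ≤ f (z u) := by
    intro u hu
    have harg : 0 ≤ a ^ 2 / b * -u := mul_nonneg (by positivity) (neg_nonneg.2 hu.2)
    rcases le_or_gt (z u) 0 with hzu | hzu
    · calc rfun a b (a ^ 2 / b * -u) ≤ rfun a b 0 :=
            antitoneOn_rfun ha hb.le self_mem_Ici harg harg
        _ = 0 := rfun_zero
        _ ≤ f (z u) := hf.nonneg_of_nonpos hzu
    · calc rfun a b (a ^ 2 / b * -u) ≤ rfun a b (z u) :=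
            antitoneOn_rfun ha hb.le (mem_Ici.2 hzu.le) harg (hzle u hu.2)
        _ ≤ f (z u) := hf.rfun_le hb.le hq0 hzu
  calc minBound a b = ∫ u in (-1 : ℝ)..0, rfun a b (a ^ 2 / b * -u) :=
        (integral_rfun_mul_neg ha hb).symm
    _ ≤ ∫ u in (-1 : ℝ)..0, f (z u) :=
        intervalIntegral.integral_mono_on (by norm_num) (intervalIntegrable_rfun_mul_neg ha hb.le)
          ((hf.continuous.comp hzc).intervalIntegrable _ _) hpt
    _ = z 1 := hm

theorem neg_sub_one_lt_log_one_sub {a : ℝ} (ha : a < 0) (h : -3 / 2 ≤ a) :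
    -a - 1 < Real.log (1 - a) := by
  have hpos : 0 < 1 - a := by linarith
  refine lt_of_lt_of_le ?_ (Real.one_sub_inv_le_log_of_pos hpos)
  rw [← sub_pos, show 1 - (1 - a)⁻¹ - (-a - 1) = (1 - a - a ^ 2) / (1 - a) by field_simp; ring]
  exact div_pos (by nlinarith) hpos

theorem three_div_four_lt_log : 3 / 4 < Real.log (9 / 4) := by
  rw [Real.lt_log_iff_exp_lt (by norm_num)]
  have hexp : Real.exp (3 / 4) ^ 4 < (9 / 4) ^ 4 := by
    rw [← Real.exp_nat_mul, show ((4 : ℕ) : ℝ) * (3 / 4) = ((3 : ℕ) : ℝ) by norm_num,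
      ← Real.exp_one_pow]
    calc Real.exp 1 ^ 3 < 2.7182818286 ^ 3 := by gcongr; exact Real.exp_one_lt_d9
      _ < (9 / 4) ^ 4 := by norm_num
  exact lt_of_pow_lt_pow_left₀ 4 (by norm_num) hexp

section minBoundEstimates

variable {a b : ℝ}

theorem div_lt_minBound (ha : a < 0) (h : -3 / 2 ≤ a) (hb : 0 < b) : a / b < minBound a b := by
  have hlog := neg_sub_one_lt_log_one_sub ha h
  rw [minBound, div_lt_div_iff_of_pos_right hb]
  nlinarith

theorem add_half_div_lt_minBound (h₁ : -3 / 2 ≤ a) (h₂ : a ≤ -5 / 4) (hb : 0 < b) :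
    (a + 1 / 2) / (b * (1 + 1 / (6 * a))) < minBound a b := by
  have hlog : 3 / 4 < Real.log (1 - a) :=
    three_div_four_lt_log.trans_le (Real.log_le_log (by norm_num) (by linarith))
  have ha : a ≠ 0 := by linarith
  have hc : 0 < 1 + 1 / (6 * a) := by
    rw [show 1 + 1 / (6 * a) = (6 * a + 1) / (6 * a) by field_simp]
    exact div_pos_of_neg_of_neg (by linarith) (by linarith)
  rw [div_lt_iff₀ (mul_pos hb hc), minBound,
    show (-a ^ 2 - a * Real.log (1 - a)) / b * (b * (1 + 1 / (6 * a))) =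
      -(a + Real.log (1 - a)) * (6 * a + 1) / 6 by field_simp; ring]
  -- with `log (1 - a) > 3/4` this reduces to `(a + 3/2)(a + 5/12) ≤ 0`
  nlinarith [mul_nonneg (by linarith : (0 : ℝ) ≤ a + 3 / 2) (by linarith : (0 : ℝ) ≤ -5 / 12 - a)]

theorem div_lt_rfun_rfun (ha : a < 0) (ha₂ : -2 < a) (hb : 0 < b) {M : ℝ} (hM : 0 < M) :
    a / b < rfun a b (rfun a b (-rfun a b M / 2)) := by
  obtain ⟨hlo, hhi⟩ := rfun_mem_Ioo ha hb hM
  have hy₀ : 0 < -rfun a b M / 2 := by linarith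
  have hy₁ : -rfun a b M / 2 ≤ a ^ 2 / (2 * b) := by
    rw [show a ^ 2 / (2 * b) = a ^ 2 / b / 2 by ring]
    linarith [neg_div b (a ^ 2)]
  have hbound : rfun a b (a ^ 2 / (2 * b)) = a ^ 3 / (b * (2 - a)) := by
    rw [rfun]
    field_simp
  have hx : a / b < rfun a b (-rfun a b M / 2) := by
    refine lt_of_lt_of_le ?_
      (hbound ▸ antitoneOn_rfun ha hb.le hy₀.le (mem_Ici.2 (by positivity)) hy₁)
    rw [div_lt_div_iff₀ hb (by nlinarith)]
    nlinarith [mul_pos (mul_pos (neg_pos.2 ha) (by linarith : (0 : ℝ) < a + 2)) hb]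
  have hx₀ := (rfun_mem_Ioo ha hb hy₀).2
  rw [div_lt_iff₀ hb] at hx
  calc a / b < 0 := div_neg_of_neg_of_pos ha hb
    _ < _ := by
      rw [rfun_eq_neg_div]
      exact div_pos (by nlinarith [sq_pos_of_neg ha]) (by linarith)

end minBoundEstimates

theorem domain_estimates_m_M_general
    (f : ℝ → ℝ) (hf : HypH f) (h2 : 0 < iteratedDeriv 2 f 0)
    (a b a₁ b₁ μ ν : ℝ)
    (haeq : a = deriv f 0) (hbeq : b = iteratedDeriv 2 f 0 / 2)
    (ha₁ : a₁ = a + 1 / 2) (hb₁ : b₁ = b * (1 + 1 / (6 * a)))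
    (hμ : μ = a / b) (hν : ν = a₁ / b₁)
    (z : ℝ → ℝ) (hz : ∀ t : ℝ, HasDerivAt z (f (z (t - 1))) t)
    (m M : ℝ) (hM : 0 < M)
    (hbd : ∀ t : ℝ, m ≤ z t ∧ z t ≤ M) (hmin : z 1 = m) :
    (deriv f 0 ∈ Set.Ico (-1.5 : ℝ) 0 →
      μ < m ∧ μ < rfun a b (rfun a b (-(rfun a b M) / 2))) ∧
    (deriv f 0 ∈ Set.Icc (-1.5 : ℝ) (-1.25) → ν < m) := by
  subst haeq ha₁ hb₁ hμ hν hmin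
  have ha : deriv f 0 < 0 := hf.2.2.1
  have hb : 0 < b := by linarith
  have hm := hf.minBound_le hb (by linarith) hz fun t => (hbd t).1
  refine ⟨fun ⟨h₁, _⟩ => ⟨?_, ?_⟩, fun ⟨h₁, h₂⟩ => ?_⟩
  · exact (div_lt_minBound ha (by linarith) hb).trans_le hm
  · exact div_lt_rfun_rfun ha (by linarith) hb hM
  · exact (add_half_div_lt_minBound (by linarith) (by linarith) hb).trans_le hm

/-- Corollary 3.5 (Corollary cy): with `m < 0 < M` as in Lemma 3.2, if
`f'(0) ∈ [-1.5, 0)` then `m > μ` and `r(r(-r(M)/2)) > μ`; if moreover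
`f'(0) ∈ [-1.5, -1.25]`, then `m > ν`. -/
theorem domain_estimates_m_M
    (f : ℝ → ℝ) (hf : HypH f) (h2 : 0 < iteratedDeriv 2 f 0)
    (a b a₁ b₁ μ ν : ℝ)
    (haeq : a = deriv f 0) (hbeq : b = iteratedDeriv 2 f 0 / 2)
    (ha₁ : a₁ = a + 1 / 2) (hb₁ : b₁ = b * (1 + 1 / (6 * a)))
    (hμ : μ = a / b) (hν : ν = a₁ / b₁)
    (z : ℝ → ℝ) (hz : ∀ t : ℝ, HasDerivAt z (f (z (t - 1))) t)
    (m M : ℝ) (hm : m < 0) (hM : 0 < M)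
    (hbd : ∀ t : ℝ, m ≤ z t ∧ z t ≤ M) (hmin : z 1 = m) :
    (deriv f 0 ∈ Set.Ico (-1.5 : ℝ) 0 →
      μ < m ∧ μ < rfun a b (rfun a b (-(rfun a b M) / 2))) ∧
    (deriv f 0 ∈ Set.Icc (-1.5 : ℝ) (-1.25) → ν < m) :=
  domain_estimates_m_M_general f hf h2 a b a₁ b₁ μ ν haeq hbeq ha₁ hb₁ hμ hν z hz m M hM hbd hmin
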